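/- Let Q₀ be a nonzero symmetric positive semidefinite n×n real matrix, let a₀ ∈ Im(Q₀), b₀ ∈ ℝ, and let f(x) = ½ xᵀQ₀x + a₀ᵀx + b₀. Let Q₀⁺ be the Moore–Penrose pseudoinverse of Q₀, i.e., the unique matrix P satisfying Q₀PQ₀ = Q₀, PQ₀P = P, (Q₀P)ᵀ = Q₀P and (PQ₀)ᵀ = PQ₀. Then the Fenchel conjugate of f satisfies f*(x) = −b₀ + ½ (x−a₀)ᵀ Q₀⁺ (x−a₀) for every x ∈ Im(Q₀), and f*(x) = +∞ for every x ∉ Im(Q₀). -/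

import Mathlib

open scoped Matrix
noncomputable section

/-- The Fenchel conjugate (w.r.t. the standard scalar product of `ℝ^n`) of a real-valued
function: `f*(x*) = sup_x (⟨x*, x⟩ − f(x))`, an extended-real value. -/
def fenchelConjR {n : ℕ} (f : (Fin n → ℝ) → ℝ) (y : Fin n → ℝ) : EReal :=
  ⨆ x : Fin n → ℝ, ((y ⬝ᵥ x - f x : ℝ) : EReal)

/-!
Write `x = Q₀u + a₀`, which is possible exactly when `x ∈ Im(Q₀)` since `a₀ ∈ Im(Q₀)`.
Completing the square gives `⟨x, v⟩ − f(v) = −b₀ + ½ uᵀQ₀u − ½ (u − v)ᵀQ₀(u − v)`, which is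
maximised at `v = u`, and `uᵀQ₀u = (Q₀u)ᵀQ₀⁺(Q₀u)` because `Q₀Q₀⁺Q₀ = Q₀`.
If `x ∉ Im(Q₀)`, some `w ∈ ker Q₀ᵀ = ker Q₀` has `⟨w, x⟩ ≠ 0`; along the line `ℝw` the function
`f` is constant while `⟨x, ·⟩` is unbounded.
-/

open Matrix Set

theorem Matrix.exists_vecMul_eq_zero_dotProduct_ne_zero_of_notMem_range
    {K m n : Type*} [Field K] [Fintype m] [Fintype n]
    (A : Matrix m n K) {x : m → K} (hx : x ∉ LinearMap.range A.mulVecLin) :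
    ∃ w : m → K, w ᵥ* A = 0 ∧ w ⬝ᵥ x ≠ 0 := by
  classical
  obtain ⟨f, hfx, hf⟩ := Submodule.exists_dual_map_eq_bot_of_notMem hx inferInstance
  set w := (dotProductEquiv K m).symm f
  have hw : ∀ v, w ⬝ᵥ v = f v := fun v =>
    LinearMap.congr_fun ((dotProductEquiv K m).apply_symm_apply f) v
  refine ⟨w, dotProduct_eq_zero _ fun v => ?_, by rwa [hw]⟩
  rw [← dotProduct_mulVec, hw]
  exact (Submodule.mem_bot K).mp (hf ▸ Submodule.mem_map_of_mem (LinearMap.mem_range_self _ v))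

namespace Matrix.IsSymm

variable {R n : Type*} [Fintype n]

theorem dotProduct_mulVec_comm [CommSemiring R] {Q : Matrix n n R} (hQ : Q.IsSymm)
    (u v : n → R) : u ⬝ᵥ Q *ᵥ v = v ⬝ᵥ Q *ᵥ u := by
  rw [dotProduct_mulVec, ← mulVec_transpose, hQ.eq, dotProduct_comm]

theorem sub_dotProduct_mulVec_sub [CommRing R] {Q : Matrix n n R} (hQ : Q.IsSymm)
    (u v : n → R) :
    (u - v) ⬝ᵥ Q *ᵥ (u - v) = u ⬝ᵥ Q *ᵥ u - 2 * (u ⬝ᵥ Q *ᵥ v) + v ⬝ᵥ Q *ᵥ v := by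
  rw [mulVec_sub, dotProduct_sub, sub_dotProduct, sub_dotProduct, hQ.dotProduct_mulVec_comm v u]
  ring

theorem mulVec_dotProduct_mulVec_mulVec_of_mul_mul_eq [CommSemiring R] {Q P : Matrix n n R}
    (hQ : Q.IsSymm) (hP : Q * P * Q = Q) (u : n → R) :
    (Q *ᵥ u) ⬝ᵥ P *ᵥ (Q *ᵥ u) = u ⬝ᵥ Q *ᵥ u := by
  conv_lhs => rw [mulVec_mulVec, ← vecMul_transpose, hQ.eq, ← dotProduct_mulVec, mulVec_mulVec,
    ← mul_assoc, hP]

end Matrix.IsSymm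

section Conjugate

variable {n : ℕ}

theorem fenchelConjR_eq_of_isGreatest {f : (Fin n → ℝ) → ℝ} {y : Fin n → ℝ} {c : ℝ}
    (h : IsGreatest (range fun v => y ⬝ᵥ v - f v) c) : fenchelConjR f y = c := by
  obtain ⟨⟨v₀, hv₀⟩, hle⟩ := h
  refine le_antisymm (iSup_le fun v => ?_) (le_iSup_of_le v₀ (le_of_eq (congrArg _ hv₀.symm)))
  exact EReal.coe_le_coe_iff.mpr (hle ⟨v, rfl⟩)

theorem fenchelConjR_eq_top_of_not_bddAbove {f : (Fin n → ℝ) → ℝ} {y : Fin n → ℝ}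
    (h : ¬ BddAbove (range fun v => y ⬝ᵥ v - f v)) : fenchelConjR f y = ⊤ := by
  refine iSup_eq_top.mpr fun r hr => ?_
  obtain ⟨s, hrs, -⟩ := EReal.lt_iff_exists_real_btwn.mp hr
  obtain ⟨_, ⟨v, rfl⟩, hsv⟩ := not_bddAbove_iff.mp h s
  exact ⟨v, hrs.trans (EReal.coe_lt_coe_iff.mpr hsv)⟩

def quadraticFun (Q : Matrix (Fin n) (Fin n) ℝ) (a : Fin n → ℝ) (b : ℝ) (v : Fin n → ℝ) : ℝ :=
  1/2 * (v ⬝ᵥ Q *ᵥ v) + a ⬝ᵥ v + b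

theorem fenchelConjR_quadraticFun_mulVec_add {Q : Matrix (Fin n) (Fin n) ℝ} (hQ : Q.PosSemidef)
    (u a : Fin n → ℝ) (b : ℝ) :
    fenchelConjR (quadraticFun Q a b) (Q *ᵥ u + a) = ((-b + 1/2 * (u ⬝ᵥ Q *ᵥ u) : ℝ) : EReal) := by
  have hQs : Q.IsSymm := isHermitian_iff_isSymm.mp hQ.1
  have hsquare : ∀ v, (Q *ᵥ u + a) ⬝ᵥ v - quadraticFun Q a b v
      = -b + 1/2 * (u ⬝ᵥ Q *ᵥ u) - 1/2 * ((u - v) ⬝ᵥ Q *ᵥ (u - v)) := fun v => by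
    rw [quadraticFun, add_dotProduct, dotProduct_comm, hQs.dotProduct_mulVec_comm v u,
      hQs.sub_dotProduct_mulVec_sub]
    ring
  refine fenchelConjR_eq_of_isGreatest
    ⟨⟨u, by simp only [hsquare, sub_self, zero_dotProduct, mul_zero, sub_zero]⟩, ?_⟩
  rintro _ ⟨v, rfl⟩
  have hnonneg : 0 ≤ (u - v) ⬝ᵥ Q *ᵥ (u - v) := by
    simpa using hQ.dotProduct_mulVec_nonneg (u - v)
  simp only [hsquare]
  linarith

theorem fenchelConjR_quadraticFun_of_notMem_range {Q : Matrix (Fin n) (Fin n) ℝ}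
    (hQ : Q.IsSymm) {a x : Fin n → ℝ} (ha : a ∈ LinearMap.range Q.mulVecLin)
    (hx : x ∉ LinearMap.range Q.mulVecLin) (b : ℝ) :
    fenchelConjR (quadraticFun Q a b) x = ⊤ := by
  obtain ⟨w, hwQ, hwx⟩ := Q.exists_vecMul_eq_zero_dotProduct_ne_zero_of_notMem_range hx
  have hQw : Q *ᵥ w = 0 := by rw [← vecMul_transpose, hQ.eq, hwQ]
  have haw : a ⬝ᵥ w = 0 := by
    obtain ⟨t, rfl⟩ := ha
    rw [mulVecLin_apply, dotProduct_comm, hQ.dotProduct_mulVec_comm, hQw, dotProduct_zero]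
  have hline : ∀ c : ℝ, x ⬝ᵥ (c • w) - quadraticFun Q a b (c • w) = c * (w ⬝ᵥ x) - b := by
    intro c
    simp only [quadraticFun, mulVec_smul, hQw, smul_zero, dotProduct_zero, dotProduct_smul, haw,
      smul_eq_mul, dotProduct_comm x w]
    ring
  refine fenchelConjR_eq_top_of_not_bddAbove (not_bddAbove_iff.mpr fun r => ?_)
  refine ⟨_, ⟨((r + b + 1) / (w ⬝ᵥ x)) • w, rfl⟩, ?_⟩
  simp only [hline, div_mul_cancel₀ _ hwx]
  linarith

end Conjugate

theorem conjugate_of_quadratic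
    {n : ℕ} (Q₀ : Matrix (Fin n) (Fin n) ℝ) (hQ : Q₀.PosSemidef)
    (a₀ : Fin n → ℝ) (ha₀ : a₀ ∈ LinearMap.range Q₀.mulVecLin) (b₀ : ℝ)
    (P : Matrix (Fin n) (Fin n) ℝ)
    (hP1 : Q₀ * P * Q₀ = Q₀) :
    (∀ x ∈ LinearMap.range Q₀.mulVecLin,
        fenchelConjR (fun v => 1/2 * (v ⬝ᵥ Q₀.mulVec v) + a₀ ⬝ᵥ v + b₀) x
          = ((-b₀ + 1/2 * ((x - a₀) ⬝ᵥ P.mulVec (x - a₀)) : ℝ) : EReal)) ∧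
      (∀ x : Fin n → ℝ, x ∉ LinearMap.range Q₀.mulVecLin →
        fenchelConjR (fun v => 1/2 * (v ⬝ᵥ Q₀.mulVec v) + a₀ ⬝ᵥ v + b₀) x = ⊤) := by
  have hQs : Q₀.IsSymm := isHermitian_iff_isSymm.mp hQ.1
  refine ⟨?_, fun x hx => fenchelConjR_quadraticFun_of_notMem_range hQs ha₀ hx b₀⟩
  obtain ⟨t, rfl⟩ := ha₀
  rintro _ ⟨s, rfl⟩
  have hx : Q₀.mulVecLin s = Q₀ *ᵥ (s - t) + Q₀.mulVecLin t := by
    simp [mulVec_sub]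
  rw [hx, add_sub_cancel_right, hQs.mulVec_dotProduct_mulVec_mulVec_of_mul_mul_eq hP1]
  exact fenchelConjR_quadraticFun_mulVec_add hQ (s - t) _ b₀
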